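/- arXiv:2101.02868 — 6 statements merged into one kernel-verified Lean document; each statement's English description precedes it below -/
import Mathlib

section
/- Let L, c, f_co > 0 and θ ∈ (0, π/2), and define F̂(f) = f^{-2}·(L − (L³π²f²/(6c²))·(1 − f_co²/(2f²) − cos θ)²) for f > 0. Then f₁⁽¹⁾ = f_co² / √(12c²/(L²π²) + 2(1 − cos θ)·f_co²) is the unique f > 0 at which the derivative of F̂ vanishes. -/
open Real

/-- The normalized signal-strength function
`F̂(f) = f⁻²·(L − (L³π²f²/(6c²))·(1 − f_co²/(2f²) − cos θ)²)`. -/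
noncomputable def Fhat (L c f_co θ : ℝ) (f : ℝ) : ℝ :=
  (L - (L ^ 3 * π ^ 2 * f ^ 2 / (6 * c ^ 2)) *
      (1 - f_co ^ 2 / (2 * f ^ 2) - Real.cos θ) ^ 2) / f ^ 2

/-- The critical point `f₁⁽¹⁾ = f_co² / √(12c²/(L²π²) + 2(1 − cos θ)·f_co²)`. -/
noncomputable def fOne (L c f_co θ : ℝ) : ℝ :=
  f_co ^ 2 / Real.sqrt (12 * c ^ 2 / (L ^ 2 * π ^ 2) + 2 * (1 - Real.cos θ) * f_co ^ 2)

/-!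
Clearing denominators, `F̂(f) = a/f² − b/f⁴ − d` with `κ = L³π²/(6c²)`, `a = L + κ(1 − cos θ)f_co²`,
`b = κf_co⁴/4` and a constant `d`. Hence `F̂'(f) = (2/f⁵)(2b − af²)`, whose only positive zero is
`f = √(2b/a)`, and `2b/a = f_co⁴ / (12c²/(L²π²) + 2(1 − cos θ)f_co²)`.
-/

noncomputable def dispersionCoeff (L c : ℝ) : ℝ := L ^ 3 * π ^ 2 / (6 * c ^ 2)

section InverseSquareQuartic

variable (a b d : ℝ) {x : ℝ}

theorem hasDerivAt_div_sq_sub_div_pow_four (hx : x ≠ 0) :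
    HasDerivAt (fun x : ℝ => a / x ^ 2 - b / x ^ 4 - d) (-2 * a / x ^ 3 + 4 * b / x ^ 5) x := by
  have h := (((hasDerivAt_const x a).div (hasDerivAt_pow 2 x) (pow_ne_zero 2 hx)).sub
    ((hasDerivAt_const x b).div (hasDerivAt_pow 4 x) (pow_ne_zero 4 hx))).sub_const d
  refine h.congr_deriv ?_
  field_simp
  ring

variable {a} in
theorem deriv_div_sq_sub_div_pow_four_eq_zero_iff (ha : a ≠ 0) (hx : 0 < x) :
    -2 * a / x ^ 3 + 4 * b / x ^ 5 = 0 ↔ x = √(2 * b / a) := by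
  rw [@eq_comm _ x, sqrt_eq_iff_mul_self_eq_of_pos hx, eq_div_iff ha]
  constructor <;> intro h
  · field_simp at h
    linarith
  · field_simp
    linarith

end InverseSquareQuartic

section SignalStrength

variable {L c : ℝ} (f_co θ : ℝ)

theorem Fhat_eq_of_ne_zero (hc : c ≠ 0) {x : ℝ} (hx : x ≠ 0) :
    Fhat L c f_co θ x =
      (L + dispersionCoeff L c * (1 - cos θ) * f_co ^ 2) / x ^ 2
        - (dispersionCoeff L c * f_co ^ 4 / 4) / x ^ 4
        - dispersionCoeff L c * (1 - cos θ) ^ 2 := by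
  rw [Fhat, dispersionCoeff]
  field_simp
  ring

theorem hasDerivAt_Fhat (hc : c ≠ 0) {f : ℝ} (hf : f ≠ 0) :
    HasDerivAt (Fhat L c f_co θ)
      (-2 * (L + dispersionCoeff L c * (1 - cos θ) * f_co ^ 2) / f ^ 3
        + 4 * (dispersionCoeff L c * f_co ^ 4 / 4) / f ^ 5) f := by
  refine (hasDerivAt_div_sq_sub_div_pow_four _ _
    (dispersionCoeff L c * (1 - cos θ) ^ 2) hf).congr_of_eventuallyEq ?_
  filter_upwards [isOpen_ne.mem_nhds hf] with x hx
  exact Fhat_eq_of_ne_zero f_co θ hc hx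

theorem dispersionCoeff_pos (hL : 0 < L) (hc : c ≠ 0) : 0 < dispersionCoeff L c := by
  unfold dispersionCoeff
  positivity

theorem fOne_eq_sqrt (hL : 0 < L) (hc : c ≠ 0) :
    fOne L c f_co θ = √(2 * (dispersionCoeff L c * f_co ^ 4 / 4)
      / (L + dispersionCoeff L c * (1 - cos θ) * f_co ^ 2)) := by
  have hcos : 0 ≤ 1 - cos θ := sub_nonneg.mpr (cos_le_one θ)
  have hD : 0 < 12 * c ^ 2 / (L ^ 2 * π ^ 2) + 2 * (1 - cos θ) * f_co ^ 2 := by positivity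
  have hκ := dispersionCoeff_pos hL hc
  have hsq : 2 * (dispersionCoeff L c * f_co ^ 4 / 4)
      / (L + dispersionCoeff L c * (1 - cos θ) * f_co ^ 2)
      = (f_co ^ 2) ^ 2 / (12 * c ^ 2 / (L ^ 2 * π ^ 2) + 2 * (1 - cos θ) * f_co ^ 2) := by
    rw [dispersionCoeff] at hκ ⊢
    field_simp
    ring
  rw [fOne, hsq, sqrt_div' _ hD.le, sqrt_sq (sq_nonneg _)]

end SignalStrength

theorem fOne_unique_critical_point_general (L c f_co θ : ℝ) (hL : 0 < L) (hc : 0 < c)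
    (hfco : 0 < f_co) :
    0 < fOne L c f_co θ ∧
      ∀ f : ℝ, 0 < f → (deriv (Fhat L c f_co θ) f = 0 ↔ f = fOne L c f_co θ) := by
  have hκ := dispersionCoeff_pos hL hc.ne'
  have ha : 0 < L + dispersionCoeff L c * (1 - cos θ) * f_co ^ 2 := by
    have : 0 ≤ 1 - cos θ := sub_nonneg.mpr (cos_le_one θ)
    positivity
  rw [fOne_eq_sqrt f_co θ hL hc.ne']
  refine ⟨sqrt_pos.mpr (by positivity), fun f hf => ?_⟩
  rw [(hasDerivAt_Fhat f_co θ hc.ne' hf.ne').deriv]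
  exact deriv_div_sq_sub_div_pow_four_eq_zero_iff _ ha.ne' hf

/-- `f₁⁽¹⁾` is the unique positive `f` at which the derivative of `F̂` vanishes. -/
theorem fOne_unique_critical_point (L c f_co θ : ℝ) (hL : 0 < L) (hc : 0 < c)
    (hfco : 0 < f_co) (hθ : θ ∈ Set.Ioo 0 (π / 2)) :
    0 < fOne L c f_co θ ∧
      ∀ f : ℝ, 0 < f → (deriv (Fhat L c f_co θ) f = 0 ↔ f = fOne L c f_co θ) :=
  fOne_unique_critical_point_general L c f_co θ hL hc hfco
end

section
/- Let L, c, f_co > 0 and θ ∈ (0, π/2), and define F̂(f) = f^{-2}·(L − (L³π²f²/(6c²))·(1 − f_co²/(2f²) − cos θ)²) for f > 0. Then f₁⁽²⁾ = √5·f_co² / √(36c²/(L²π²) + 6(1 − cos θ)·f_co²) is the unique f > 0 at which the second derivative of F̂ vanishes. -/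
open Real Filter Topology

/-- The inflection point `f₁⁽²⁾ = √5·f_co² / √(36c²/(L²π²) + 6(1 − cos θ)·f_co²)`. -/
noncomputable def fTwo (L c f_co θ : ℝ) : ℝ :=
  Real.sqrt 5 * f_co ^ 2 /
    Real.sqrt (36 * c ^ 2 / (L ^ 2 * π ^ 2) + 6 * (1 - Real.cos θ) * f_co ^ 2)

/-!
Expanding the square shows that `F̂(f) = C₀ + C₂ f⁻² + C₄ f⁻⁴` with `C₂ > 0 > C₄`, so
`F̂''(f) = 2 f⁻⁶ (3 C₂ f² + 10 C₄)` vanishes at exactly one positive `f`, namely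
`f² = -10 C₄ / (3 C₂)`, and this value is `f₁⁽²⁾²`.
-/

section EvenLaurent

variable (a b d : ℝ)

theorem hasDerivAt_evenLaurent {x : ℝ} (hx : x ≠ 0) :
    HasDerivAt (fun y : ℝ => a + b / y ^ 2 + d / y ^ 4) (-2 * b / x ^ 3 - 4 * d / x ^ 5) x := by
  have h := ((hasDerivAt_const x a).add
      ((hasDerivAt_const x b).div (hasDerivAt_pow 2 x) (pow_ne_zero 2 hx))).add
      ((hasDerivAt_const x d).div (hasDerivAt_pow 4 x) (pow_ne_zero 4 hx))
  refine h.congr_deriv ?_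
  field_simp
  ring

theorem hasDerivAt_deriv_evenLaurent {x : ℝ} (hx : x ≠ 0) :
    HasDerivAt (fun y : ℝ => -2 * b / y ^ 3 - 4 * d / y ^ 5) (6 * b / x ^ 4 + 20 * d / x ^ 6) x := by
  have h := ((hasDerivAt_const x (-2 * b)).div (hasDerivAt_pow 3 x) (pow_ne_zero 3 hx)).sub
      ((hasDerivAt_const x (4 * d)).div (hasDerivAt_pow 5 x) (pow_ne_zero 5 hx))
  refine h.congr_deriv ?_
  field_simp
  ring

theorem deriv_deriv_evenLaurent {x : ℝ} (hx : x ≠ 0) :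
    deriv (deriv fun y : ℝ => a + b / y ^ 2 + d / y ^ 4) x = 6 * b / x ^ 4 + 20 * d / x ^ 6 := by
  have hderiv : deriv (fun y : ℝ => a + b / y ^ 2 + d / y ^ 4)
      =ᶠ[𝓝 x] fun y => -2 * b / y ^ 3 - 4 * d / y ^ 5 := by
    filter_upwards [compl_singleton_mem_nhds hx] with y hy
    exact (hasDerivAt_evenLaurent a b d hy).deriv
  rw [hderiv.deriv_eq, (hasDerivAt_deriv_evenLaurent b d hx).deriv]

theorem deriv_deriv_evenLaurent_eq_zero_iff {x r : ℝ} (hx : 0 < x) (hr : 0 < r) (hb : b ≠ 0)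
    (hr_sq : r ^ 2 * (3 * b) = -(10 * d)) :
    deriv (deriv fun y : ℝ => a + b / y ^ 2 + d / y ^ 4) x = 0 ↔ x = r := by
  have hx6 : x ^ 6 ≠ 0 := pow_ne_zero 6 hx.ne'
  have hfactor : 6 * b / x ^ 4 + 20 * d / x ^ 6 = 2 * (x ^ 2 * (3 * b) + 10 * d) / x ^ 6 := by
    field_simp
    ring
  rw [deriv_deriv_evenLaurent a b d hx.ne', hfactor, div_eq_zero_iff, or_iff_left hx6,
    ← pow_left_inj₀ hx.le hr.le two_ne_zero]
  constructor
  · intro h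
    exact mul_right_cancel₀ (mul_ne_zero three_ne_zero hb) (by linarith)
  · intro h
    rw [h]
    linarith

end EvenLaurent

theorem Fhat_eventuallyEq_evenLaurent (L c f_co θ : ℝ) {f : ℝ} (hf : f ≠ 0) :
    Fhat L c f_co θ =ᶠ[𝓝 f] fun y =>
      -(L ^ 3 * π ^ 2 / (6 * c ^ 2)) * (1 - cos θ) ^ 2
        + (L + L ^ 3 * π ^ 2 / (6 * c ^ 2) * (1 - cos θ) * f_co ^ 2) / y ^ 2
        + -(L ^ 3 * π ^ 2 / (24 * c ^ 2)) * f_co ^ 4 / y ^ 4 := by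
  filter_upwards [compl_singleton_mem_nhds hf] with y (hy : y ≠ 0)
  simp only [Fhat]
  field_simp
  ring

section fTwo

variable {L c f_co : ℝ} (θ : ℝ)

theorem fTwo_radicand_pos (hL : L ≠ 0) (hc : c ≠ 0) :
    0 < 36 * c ^ 2 / (L ^ 2 * π ^ 2) + 6 * (1 - cos θ) * f_co ^ 2 := by
  have hcos : 0 ≤ 1 - cos θ := sub_nonneg.mpr (cos_le_one θ)
  have := pi_pos
  positivity

theorem fTwo_pos (hL : L ≠ 0) (hc : c ≠ 0) (hfco : f_co ≠ 0) : 0 < fTwo L c f_co θ :=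
  div_pos (by positivity) (sqrt_pos.mpr (fTwo_radicand_pos θ hL hc))

theorem fTwo_sq_mul (hL : L ≠ 0) (hc : c ≠ 0) :
    fTwo L c f_co θ ^ 2 * (3 * (L + L ^ 3 * π ^ 2 / (6 * c ^ 2) * (1 - cos θ) * f_co ^ 2))
      = -(10 * (-(L ^ 3 * π ^ 2 / (24 * c ^ 2)) * f_co ^ 4)) := by
  have hD := fTwo_radicand_pos (f_co := f_co) θ hL hc
  have := pi_pos.ne'
  rw [fTwo, div_pow, mul_pow, sq_sqrt (by norm_num), sq_sqrt hD.le, div_mul_eq_mul_div,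
    div_eq_iff hD.ne']
  field_simp
  ring

end fTwo

theorem fTwo_unique_inflection_point_general (L c f_co θ : ℝ) (hL : 0 < L) (hc : 0 < c)
    (hfco : 0 < f_co) :
    0 < fTwo L c f_co θ ∧
      ∀ f : ℝ, 0 < f →
        (deriv (deriv (Fhat L c f_co θ)) f = 0 ↔ f = fTwo L c f_co θ) := by
  have hpos := fTwo_pos θ hL.ne' hc.ne' hfco.ne'
  refine ⟨hpos, fun f hf => ?_⟩
  have hC₂ : L + L ^ 3 * π ^ 2 / (6 * c ^ 2) * (1 - cos θ) * f_co ^ 2 ≠ 0 := by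
    have := sub_nonneg.mpr (cos_le_one θ)
    positivity
  rw [(Fhat_eventuallyEq_evenLaurent L c f_co θ hf.ne').deriv.deriv_eq]
  exact deriv_deriv_evenLaurent_eq_zero_iff _ _ _ hf hpos hC₂ (fTwo_sq_mul θ hL.ne' hc.ne')

/-- `f₁⁽²⁾` is the unique positive `f` at which the second derivative of `F̂`
vanishes. -/
theorem fTwo_unique_inflection_point (L c f_co θ : ℝ) (hL : 0 < L) (hc : 0 < c)
    (hfco : 0 < f_co) (hθ : θ ∈ Set.Ioo 0 (π / 2)) :
    0 < fTwo L c f_co θ ∧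
      ∀ f : ℝ, 0 < f →
        (deriv (deriv (Fhat L c f_co θ)) f = 0 ↔ f = fTwo L c f_co θ) :=
  fTwo_unique_inflection_point_general L c f_co θ hL hc hfco
end

section
/- Let L, c, f_co > 0 and θ ∈ (0, π/2), define F̂(f) = f^{-2}·(L − (L³π²f²/(6c²))·(1 − f_co²/(2f²) − cos θ)²) for f > 0, and set f₁⁽¹⁾ = f_co² / √(12c²/(L²π²) + 2(1 − cos θ)·f_co²). Then the derivative of F̂ is strictly positive on (0, f₁⁽¹⁾) and strictly negative on (f₁⁽¹⁾, ∞). -/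
open Real

/-- the derivative of `F̂` is strictly positive on `(0, f₁⁽¹⁾)` and strictly
negative on `(f₁⁽¹⁾, ∞)`. -/
theorem deriv_Fhat_sign (L c f_co θ : ℝ) (hL : 0 < L) (hc : 0 < c)
    (hfco : 0 < f_co) (hθ : θ ∈ Set.Ioo 0 (π / 2)) :
    (∀ f ∈ Set.Ioo 0 (fOne L c f_co θ), 0 < deriv (Fhat L c f_co θ) f) ∧
      (∀ f ∈ Set.Ioi (fOne L c f_co θ), deriv (Fhat L c f_co θ) f < 0) := by
  have hπ : (0:ℝ) < π := Real.pi_pos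
  have hk : Real.cos θ < 1 := by
    have h1 : Real.cos θ < Real.cos 0 := by
      apply Real.cos_lt_cos_of_nonneg_of_le_pi le_rfl
      · linarith [hθ.2, Real.pi_pos]
      · exact hθ.1
    simpa using h1
  set k := Real.cos θ with hkdef
  set A : ℝ := L ^ 3 * π ^ 2 / (6 * c ^ 2) with hA
  set P : ℝ := L + 2 * A * (1 - k) * (f_co ^ 2 / 2) with hPdef
  set Q : ℝ := A * (f_co ^ 2 / 2) ^ 2 with hQdef
  set C : ℝ := A * (1 - k) ^ 2 with hC
  have hAp : 0 < A := by positivity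
  have h1k : 0 < 1 - k := by linarith
  have hP : 0 < P := by
    have : 0 < 2 * A * (1 - k) * (f_co ^ 2 / 2) :=
      mul_pos (mul_pos (mul_pos two_pos hAp) h1k) (by positivity)
    rw [hPdef]; linarith
  have hQ : 0 < Q := by positivity
  set D : ℝ := 12 * c ^ 2 / (L ^ 2 * π ^ 2) + 2 * (1 - k) * f_co ^ 2 with hD
  have hDp : 0 < D := by
    have h1 : 0 < 12 * c ^ 2 / (L ^ 2 * π ^ 2) := by positivity
    have h2 : 0 < 2 * (1 - k) * f_co ^ 2 := mul_pos (mul_pos two_pos h1k) (by positivity)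
    rw [hD]; linarith
  have hf1 : fOne L c f_co θ = f_co ^ 2 / Real.sqrt D := rfl
  have hf1pos : 0 < fOne L c f_co θ := by
    rw [hf1]; positivity
  have hf1sq : (fOne L c f_co θ) ^ 2 * P = 2 * Q := by
    rw [hf1, div_pow, Real.sq_sqrt hDp.le, div_mul_eq_mul_div, div_eq_iff hDp.ne']
    rw [hPdef, hQdef, hA, hD]
    field_simp
    ring
  -- derivative computation
  have hderiv : ∀ f : ℝ, 0 < f →
      deriv (Fhat L c f_co θ) f = 2 * (f⁻¹) ^ 5 * (2 * Q - P * f ^ 2) := by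
    intro f hf
    have hf0 : f ≠ 0 := hf.ne'
    have hg : HasDerivAt (fun x : ℝ => P * x⁻¹ ^ 2 - Q * x⁻¹ ^ 4 - C)
        (P * (2 * f⁻¹ ^ 1 * (-(f ^ 2)⁻¹)) - Q * (4 * f⁻¹ ^ 3 * (-(f ^ 2)⁻¹))) f := by
      have h1 := ((hasDerivAt_inv hf0).pow 2).const_mul P
      have h2 := ((hasDerivAt_inv hf0).pow 4).const_mul Q
      simpa using (h1.sub h2).sub_const C
    have heq : Fhat L c f_co θ =ᶠ[nhds f] fun x : ℝ => P * x⁻¹ ^ 2 - Q * x⁻¹ ^ 4 - C := by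
      filter_upwards [eventually_gt_nhds hf] with x hx  -- x > 0
      have hx0 : x ≠ 0 := hx.ne'
      rw [Fhat, hPdef, hQdef, hC, hA]
      field_simp
      ring
    rw [heq.deriv_eq, hg.deriv]
    field_simp
    ring
  constructor
  · intro f hf
    rw [hderiv f hf.1]
    have h1 : f ^ 2 < (fOne L c f_co θ) ^ 2 := by
      apply pow_lt_pow_left₀ hf.2 hf.1.le
      norm_num
    have h2 : P * f ^ 2 < 2 * Q := by
      calc P * f ^ 2 < P * (fOne L c f_co θ) ^ 2 := (mul_lt_mul_iff_right₀ hP).mpr h1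
        _ = (fOne L c f_co θ) ^ 2 * P := mul_comm _ _
        _ = 2 * Q := hf1sq
    have hfi : 0 < f⁻¹ := inv_pos.mpr hf.1
    exact mul_pos (mul_pos two_pos (pow_pos hfi 5)) (by linarith)
  · intro f hf
    have hfpos : 0 < f := hf1pos.trans hf
    rw [hderiv f hfpos]
    have h1 : (fOne L c f_co θ) ^ 2 < f ^ 2 := by
      apply pow_lt_pow_left₀ hf hf1pos.le
      norm_num
    have h2 : 2 * Q < P * f ^ 2 := by
      calc 2 * Q = (fOne L c f_co θ) ^ 2 * P := hf1sq.symm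
        _ = P * (fOne L c f_co θ) ^ 2 := mul_comm _ _
        _ < P * f ^ 2 := (mul_lt_mul_iff_right₀ hP).mpr h1
    have hfi : 0 < f⁻¹ := inv_pos.mpr hfpos
    exact mul_neg_of_pos_of_neg (mul_pos two_pos (pow_pos hfi 5)) (by linarith)
end

section
/- Let L, c, f_co > 0 and θ ∈ (0, π/2), define F̂(f) = f^{-2}·(L − (L³π²f²/(6c²))·(1 − f_co²/(2f²) − cos θ)²) for f > 0, and set f₁⁽²⁾ = √5·f_co² / √(36c²/(L²π²) + 6(1 − cos θ)·f_co²). Then the second derivative of F̂ is strictly negative on (0, f₁⁽²⁾) and strictly positive on (f₁⁽²⁾, ∞). -/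
open Real

/-! Expanding the square, with `A = L³π²/(6c²)` and `k = 1 - cos θ`,
`F̂(f) = (L + A k f_co²) f⁻² - (A f_co⁴ / 4) f⁻⁴ - A k²` for `f ≠ 0`,
so `F̂''(f) = f⁻⁶ (6 (L + A k f_co²) f² - 5 A f_co⁴)`. Since `6L = A · 36c²/(L²π²)`, this is
`A D f⁻⁶ (f² - f₁⁽²⁾²)` with `D = 36c²/(L²π²) + 6k f_co² > 0` the radicand in `f₁⁽²⁾`. -/

section TwoTermLaurent

variable (a b e : ℝ) (p q : ℤ) {x : ℝ}

theorem hasDerivAt_mul_zpow_add_mul_zpow_add (hx : x ≠ 0) :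
    HasDerivAt (fun y => a * y ^ p + b * y ^ q + e)
      (a * p * x ^ (p - 1) + b * q * x ^ (q - 1) + 0) x := by
  have hp := (hasDerivAt_zpow p x (Or.inl hx)).const_mul a
  have hq := (hasDerivAt_zpow q x (Or.inl hx)).const_mul b
  exact ((hp.add hq).add_const e).congr_deriv (by ring)

theorem deriv_deriv_mul_zpow_add_mul_zpow_add (hx : x ≠ 0) :
    deriv (deriv fun y => a * y ^ p + b * y ^ q + e) x =
      a * p * (p - 1) * x ^ (p - 2) + b * q * (q - 1) * x ^ (q - 2) := by
  have hderiv : deriv (fun y => a * y ^ p + b * y ^ q + e) =ᶠ[nhds x]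
      fun y => (a * p) * y ^ (p - 1) + (b * q) * y ^ (q - 1) + 0 := by
    filter_upwards [eventually_ne_nhds hx] with y hy
    exact (hasDerivAt_mul_zpow_add_mul_zpow_add a b e p q hy).deriv
  rw [hderiv.deriv_eq, (hasDerivAt_mul_zpow_add_mul_zpow_add _ _ _ _ _ hx).deriv,
    sub_sub, sub_sub]
  push_cast
  ring

end TwoTermLaurent

section Fhat

variable (L c f_co θ : ℝ)

theorem Fhat_eq_zpow {f : ℝ} (hf : f ≠ 0) :
    Fhat L c f_co θ f =
      (L + L ^ 3 * π ^ 2 / (6 * c ^ 2) * (1 - cos θ) * f_co ^ 2) * f ^ (-2 : ℤ) +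
        -(L ^ 3 * π ^ 2 / (6 * c ^ 2) * f_co ^ 4 / 4) * f ^ (-4 : ℤ) +
          -(L ^ 3 * π ^ 2 / (6 * c ^ 2) * (1 - cos θ) ^ 2) := by
  simp only [Fhat, zpow_neg, zpow_ofNat]
  field_simp
  ring

theorem deriv_deriv_Fhat (hL : L ≠ 0) (hc : c ≠ 0) {f : ℝ} (hf : f ≠ 0) :
    deriv (deriv (Fhat L c f_co θ)) f =
      L ^ 3 * π ^ 2 / (6 * c ^ 2) * f ^ (-6 : ℤ) *
        ((36 * c ^ 2 / (L ^ 2 * π ^ 2) + 6 * (1 - cos θ) * f_co ^ 2) * f ^ 2 - 5 * f_co ^ 4) := by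
  have hlaurent : Fhat L c f_co θ =ᶠ[nhds f] fun y =>
      (L + L ^ 3 * π ^ 2 / (6 * c ^ 2) * (1 - cos θ) * f_co ^ 2) * y ^ (-2 : ℤ) +
        -(L ^ 3 * π ^ 2 / (6 * c ^ 2) * f_co ^ 4 / 4) * y ^ (-4 : ℤ) +
          -(L ^ 3 * π ^ 2 / (6 * c ^ 2) * (1 - cos θ) ^ 2) := by
    filter_upwards [eventually_ne_nhds hf] with y hy using Fhat_eq_zpow L c f_co θ hy
  rw [hlaurent.deriv.deriv_eq, deriv_deriv_mul_zpow_add_mul_zpow_add _ _ _ _ _ hf]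
  have hf4 : f ^ (-4 : ℤ) = f ^ (-6 : ℤ) * f ^ 2 := by
    rw [← zpow_natCast, ← zpow_add₀ hf]; norm_num
  push_cast
  rw [hf4]
  field_simp
  ring

theorem fTwo_sq :
    fTwo L c f_co θ ^ 2 =
      5 * f_co ^ 4 / (36 * c ^ 2 / (L ^ 2 * π ^ 2) + 6 * (1 - cos θ) * f_co ^ 2) := by
  have hD : 0 ≤ 36 * c ^ 2 / (L ^ 2 * π ^ 2) + 6 * (1 - cos θ) * f_co ^ 2 :=
    add_nonneg (by positivity) (mul_nonneg (by linarith [cos_le_one θ]) (sq_nonneg f_co))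
  rw [fTwo, div_pow, mul_pow, sq_sqrt (by norm_num), sq_sqrt hD]
  ring

theorem sign_deriv_deriv_Fhat (hL : 0 < L) (hc : 0 < c) {f : ℝ} (hf : f ≠ 0) :
    SignType.sign (deriv (deriv (Fhat L c f_co θ)) f) =
      SignType.sign (f ^ 2 - fTwo L c f_co θ ^ 2) := by
  set D := 36 * c ^ 2 / (L ^ 2 * π ^ 2) + 6 * (1 - cos θ) * f_co ^ 2
  have hD : 0 < D :=
    add_pos_of_pos_of_nonneg (by positivity)
      (mul_nonneg (by linarith [cos_le_one θ]) (sq_nonneg f_co))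
  have hfactor : D * f ^ 2 - 5 * f_co ^ 4 = D * (f ^ 2 - fTwo L c f_co θ ^ 2) := by
    rw [fTwo_sq, mul_sub, mul_div_cancel₀ _ hD.ne']
  rw [deriv_deriv_Fhat L c f_co θ hL.ne' hc.ne' hf, hfactor, sign_mul, sign_mul, sign_mul,
    sign_pos (by positivity), sign_pos (Even.zpow_pos (by decide) hf), sign_pos hD,
    one_mul, one_mul, one_mul]

end Fhat

theorem second_deriv_Fhat_sign_general (L c f_co θ : ℝ) (hL : 0 < L) (hc : 0 < c) :
    (∀ f ∈ Set.Ioo 0 (fTwo L c f_co θ), deriv (deriv (Fhat L c f_co θ)) f < 0) ∧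
      (∀ f ∈ Set.Ioi (fTwo L c f_co θ), 0 < deriv (deriv (Fhat L c f_co θ)) f) := by
  have hfTwo : 0 ≤ fTwo L c f_co θ := by unfold fTwo; positivity
  constructor
  · rintro f ⟨hf, hlt⟩
    rw [← sign_eq_neg_one_iff, sign_deriv_deriv_Fhat L c f_co θ hL hc hf.ne', sign_eq_neg_one_iff,
      sub_neg]
    exact pow_lt_pow_left₀ hlt hf.le two_ne_zero
  · intro f (hlt : fTwo L c f_co θ < f)
    have hf : 0 < f := hfTwo.trans_lt hlt
    rw [← sign_eq_one_iff, sign_deriv_deriv_Fhat L c f_co θ hL hc hf.ne', sign_eq_one_iff, sub_pos]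
    exact pow_lt_pow_left₀ hlt hfTwo two_ne_zero

/-- the second derivative of `F̂` is strictly negative on `(0, f₁⁽²⁾)` and
strictly positive on `(f₁⁽²⁾, ∞)`. -/
theorem second_deriv_Fhat_sign (L c f_co θ : ℝ) (hL : 0 < L) (hc : 0 < c)
    (hfco : 0 < f_co) (hθ : θ ∈ Set.Ioo 0 (π / 2)) :
    (∀ f ∈ Set.Ioo 0 (fTwo L c f_co θ), deriv (deriv (Fhat L c f_co θ)) f < 0) ∧
      (∀ f ∈ Set.Ioi (fTwo L c f_co θ), 0 < deriv (deriv (Fhat L c f_co θ)) f) :=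
  second_deriv_Fhat_sign_general L c f_co θ hL hc
end

section
/- Let ε > 0, set Λ = 10^{ε/20}, and let f > 0 and B be real with 0 < B < 2f. Under the free-space path loss model, where the received signal strength at frequency g > 0 equals K·g^{-2} for a constant K > 0, the signal-strength difference in decibels between the edge frequencies of the subchannel [f − B/2, f + B/2], namely 10·log₁₀(K·(f − B/2)^{-2}) − 10·log₁₀(K·(f + B/2)^{-2}), is at most ε if and only if B ≤ 2f·(Λ − 1)/(Λ + 1). -/
open Real

/-- under the FSPL model with received strength `K·g⁻²`, the dB difference
between the subchannel edge frequencies is at most `ε` iff `B ≤ 2f(Λ−1)/(Λ+1)`,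
where `Λ = 10^(ε/20)`. -/
theorem fspl_bandwidth_constraint (ε : ℝ) (hε : 0 < ε) (f B K : ℝ) (hf : 0 < f)
    (hB : 0 < B) (hB2 : B < 2 * f) (hK : 0 < K) :
    10 * Real.logb 10 (K / (f - B / 2) ^ 2) - 10 * Real.logb 10 (K / (f + B / 2) ^ 2) ≤ ε ↔
      B ≤ 2 * f * ((10 : ℝ) ^ (ε / 20) - 1) / ((10 : ℝ) ^ (ε / 20) + 1) := by
  set Λ : ℝ := (10 : ℝ) ^ (ε / 20) with hΛ
  have ha : 0 < f - B / 2 := by linarith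
  have hb : 0 < f + B / 2 := by linarith
  have hΛ0 : 0 < Λ := Real.rpow_pos_of_pos (by norm_num) _
  have hlog : 10 * Real.logb 10 (K / (f - B / 2) ^ 2)
      - 10 * Real.logb 10 (K / (f + B / 2) ^ 2)
      = 20 * Real.logb 10 ((f + B / 2) / (f - B / 2)) := by
    rw [Real.logb_div hK.ne' (by positivity), Real.logb_div hK.ne' (by positivity),
      Real.logb_div hb.ne' ha.ne', Real.logb_pow, Real.logb_pow]
    ring
  rw [hlog]
  have h1 : (20 : ℝ) * Real.logb 10 ((f + B / 2) / (f - B / 2)) ≤ ε ↔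
      Real.logb 10 ((f + B / 2) / (f - B / 2)) ≤ ε / 20 := by
    constructor <;> intro h <;> linarith
  rw [h1, Real.logb_le_iff_le_rpow (by norm_num) (by positivity), ← hΛ,
    div_le_iff₀ ha]
  constructor
  · intro h
    rw [le_div_iff₀ (by linarith)]
    nlinarith
  · intro h
    rw [le_div_iff₀ (by linarith)] at h
    nlinarith
end

section
/- (Core of Theorem 2.) Let L, c, f_co > 0 and θ ∈ (0, π/2), define F̂(f) = f^{-2}·(L − (L³π²f²/(6c²))·(1 − f_co²/(2f²) − cos θ)²) for f > 0, and set f₁⁽¹⁾ = f_co² / √(12c²/(L²π²) + 2(1 − cos θ)·f_co²). Let Λ > 1 and let f_min, f_max > 0 satisfy f_min ≤ f₁⁽¹⁾ ≤ f_max. Then for every f > 0 with f ≤ Λ^{-1}·f_min or f ≥ Λ·f_max, one has F̂(f) ≤ max(F̂(Λ^{-1}·f_min), F̂(Λ·f_max)). Hence the best new center frequency outside the already-occupied band is Λ^{-1}·f_min if F̂(Λ^{-1}·f_min) > F̂(Λ·f_max) and Λ·f_max otherwise. -/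
open Real

/-- core of Theorem 2: if `f_min ≤ f₁⁽¹⁾ ≤ f_max`, then for every admissible
new center frequency `f` (i.e. `f ≤ Λ⁻¹·f_min` or `f ≥ Λ·f_max`),
`F̂(f) ≤ max (F̂(Λ⁻¹·f_min)) (F̂(Λ·f_max))`, so the best new center frequency is
`Λ⁻¹·f_min` if `F̂(Λ⁻¹·f_min) > F̂(Λ·f_max)` and `Λ·f_max` otherwise. -/
theorem best_new_center_frequency (L c f_co θ : ℝ) (hL : 0 < L) (hc : 0 < c)
    (hfco : 0 < f_co) (hθ : θ ∈ Set.Ioo 0 (π / 2)) (Λ f_min f_max : ℝ)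
    (hΛ : 1 < Λ) (hmin : 0 < f_min) (hmax : 0 < f_max)
    (h₁ : f_min ≤ fOne L c f_co θ) (h₂ : fOne L c f_co θ ≤ f_max) :
    ∀ f : ℝ, 0 < f → (f ≤ Λ⁻¹ * f_min ∨ Λ * f_max ≤ f) →
      Fhat L c f_co θ f ≤
        max (Fhat L c f_co θ (Λ⁻¹ * f_min)) (Fhat L c f_co θ (Λ * f_max)) := by
  have hπ := Real.pi_pos
  have hcos : Real.cos θ ≤ 1 := Real.cos_le_one θ
  obtain ⟨D, hDdef⟩ : ∃ x : ℝ,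
      x = 12 * c ^ 2 / (L ^ 2 * π ^ 2) + 2 * (1 - Real.cos θ) * f_co ^ 2 := ⟨_, rfl⟩
  have hD : 0 < D := by
    rw [hDdef]
    have h1 : 0 < 12 * c ^ 2 / (L ^ 2 * π ^ 2) := by positivity
    have h2 : 0 ≤ 2 * (1 - Real.cos θ) * f_co ^ 2 := by
      have : (0:ℝ) ≤ 1 - Real.cos θ := by linarith
      positivity
    linarith
  have hsq : Real.sqrt D ^ 2 = D := Real.sq_sqrt hD.le
  have hsqpos : 0 < Real.sqrt D := Real.sqrt_pos.2 hD
  obtain ⟨f₁, hf1def⟩ : ∃ x : ℝ, x = fOne L c f_co θ := ⟨_, rfl⟩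
  rw [← hf1def] at h₁ h₂
  have hf1' : f₁ = f_co ^ 2 / Real.sqrt D := by rw [hf1def, hDdef]; rfl
  have hf1 : 0 < f₁ := by rw [hf1']; positivity
  have hf1sq : f₁ ^ 2 * D = f_co ^ 4 := by
    rw [hf1', div_pow, hsq]
    field_simp
  -- quadratic coefficients:  F̂(f) = A·x − B·x² − C  with  x = 1/f²
  obtain ⟨A, hAdef⟩ : ∃ x : ℝ,
      x = L + L ^ 3 * π ^ 2 * f_co ^ 2 * (1 - Real.cos θ) / (6 * c ^ 2) := ⟨_, rfl⟩
  obtain ⟨B, hBdef⟩ : ∃ x : ℝ, x = L ^ 3 * π ^ 2 * f_co ^ 4 / (24 * c ^ 2) := ⟨_, rfl⟩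
  obtain ⟨C, hCdef⟩ : ∃ x : ℝ,
      x = L ^ 3 * π ^ 2 / (6 * c ^ 2) * (1 - Real.cos θ) ^ 2 := ⟨_, rfl⟩
  have hB : 0 < B := by rw [hBdef]; positivity
  have hkey : A * f₁ ^ 2 = 2 * B := by
    have h0 : A * f_co ^ 4 = 2 * B * D := by
      rw [hAdef, hBdef, hDdef]
      field_simp
      ring
    refine mul_right_cancel₀ hD.ne' ?_
    linear_combination h0 + A * hf1sq
  have hF : ∀ f : ℝ, 0 < f →
      Fhat L c f_co θ f = A * (f ^ 2)⁻¹ - B * ((f ^ 2)⁻¹) ^ 2 - C := by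
    intro f hf
    have hf' : f ≠ 0 := hf.ne'
    unfold Fhat
    rw [hAdef, hBdef, hCdef]
    field_simp
    ring
  -- monotonicity of the quadratic on each side of the vertex x₀ = 1/f₁²
  have hf1sqpos : 0 < f₁ ^ 2 := by positivity
  have hmonoR : ∀ x y : ℝ, (f₁ ^ 2)⁻¹ ≤ y → y ≤ x →
      A * x - B * x ^ 2 - C ≤ A * y - B * y ^ 2 - C := by
    intro x y h1 h2
    have h1' : 1 ≤ y * f₁ ^ 2 := by
      rw [← inv_mul_cancel₀ hf1sqpos.ne']
      exact mul_le_mul_of_nonneg_right h1 hf1sqpos.le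
    have hA2 : A ≤ 2 * B * y := by
      have h3 : 2 * B * 1 ≤ 2 * B * (y * f₁ ^ 2) :=
        mul_le_mul_of_nonneg_left h1' (by linarith)
      have h4 : A * f₁ ^ 2 ≤ (2 * B * y) * f₁ ^ 2 := by
        rw [hkey]
        have e : 2 * B * (y * f₁ ^ 2) = 2 * B * y * f₁ ^ 2 := by ring
        linarith [e ▸ h3]
      exact le_of_mul_le_mul_right h4 hf1sqpos
    have hBA : 0 ≤ B * (x + y) - A := by
      have e : B * (x + y) - A = B * (x - y) + (2 * B * y - A) := by ring
      have h5 : 0 ≤ B * (x - y) := mul_nonneg hB.le (sub_nonneg.2 h2)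
      linarith
    have e : (A * y - B * y ^ 2 - C) - (A * x - B * x ^ 2 - C)
        = (x - y) * (B * (x + y) - A) := by ring
    linarith [mul_nonneg (sub_nonneg.2 h2) hBA, e]
  have hmonoL : ∀ x y : ℝ, x ≤ y → y ≤ (f₁ ^ 2)⁻¹ →
      A * x - B * x ^ 2 - C ≤ A * y - B * y ^ 2 - C := by
    intro x y h2 h1
    have h1' : y * f₁ ^ 2 ≤ 1 := by
      rw [← inv_mul_cancel₀ hf1sqpos.ne']
      exact mul_le_mul_of_nonneg_right h1 hf1sqpos.le
    have hx' : x * f₁ ^ 2 ≤ 1 :=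
      le_trans (mul_le_mul_of_nonneg_right h2 hf1sqpos.le) h1'
    have hBA : B * (x + y) ≤ A := by
      have h3 : B * (x * f₁ ^ 2) ≤ B * 1 := mul_le_mul_of_nonneg_left hx' hB.le
      have h4 : B * (y * f₁ ^ 2) ≤ B * 1 := mul_le_mul_of_nonneg_left h1' hB.le
      have h5 : B * (x + y) * f₁ ^ 2 ≤ A * f₁ ^ 2 := by
        rw [hkey]
        have e : B * (x + y) * f₁ ^ 2 = B * (x * f₁ ^ 2) + B * (y * f₁ ^ 2) := by ring
        linarith [e]
      exact le_of_mul_le_mul_right h5 hf1sqpos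
    have e : (A * y - B * y ^ 2 - C) - (A * x - B * x ^ 2 - C)
        = (y - x) * (A - B * (x + y)) := by ring
    linarith [mul_nonneg (sub_nonneg.2 h2) (sub_nonneg.2 hBA), e]
  intro f hf hcase
  have hΛpos : 0 < Λ := lt_trans one_pos hΛ
  have hmL : 0 < Λ⁻¹ * f_min := by positivity
  have hmR : 0 < Λ * f_max := by positivity
  have hinv : ∀ a b : ℝ, 0 < a → a ≤ b → (b ^ 2)⁻¹ ≤ (a ^ 2)⁻¹ := by
    intro a b ha hab
    have hb : 0 < b := lt_of_lt_of_le ha hab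
    rw [inv_le_inv₀ (by positivity) (by positivity)]
    exact pow_le_pow_left₀ ha.le hab 2
  rcases hcase with hle | hge
  · -- left side: f ≤ Λ⁻¹ f_min ≤ f₁
    have hlef1 : Λ⁻¹ * f_min ≤ f₁ := by
      have h3 : Λ⁻¹ < 1 := inv_lt_one_of_one_lt₀ hΛ
      have h4 := mul_le_mul_of_nonneg_right h3.le hmin.le
      rw [one_mul] at h4
      linarith
    refine le_trans ?_ (le_max_left _ _)
    rw [hF f hf, hF _ hmL]
    exact hmonoR _ _ (hinv _ _ hmL hlef1) (hinv _ _ hf hle)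
  · -- right side: f₁ ≤ Λ f_max ≤ f
    have hgef1 : f₁ ≤ Λ * f_max := by
      have h4 := mul_le_mul_of_nonneg_right hΛ.le hmax.le
      rw [one_mul] at h4
      linarith
    refine le_trans ?_ (le_max_right _ _)
    rw [hF f hf, hF _ hmR]
    exact hmonoL _ _ (hinv _ _ hmR hge) (hinv _ _ hf1 hgef1)
end
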